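/- Let x₁,…,x_n be distinct real numbers with ranks R_i = #{j : x_j ≤ x_i}. Then the empirical mid-distribution transform satisfies F̃_X^mid(x_i) = R_i/n − 1/(2n), the normalizing factor satisfies 1 − Σ_{x∈U} p̃_X(x)³ = 1 − 1/n² = (n²−1)/n², and consequently the first empirical LP-basis function satisfies T₁(x_i; F̃_X) = √(12/(n²−1)) (R_i − (n+1)/2) for each i = 1,…,n. -/

import Mathlib

/-! With distinct observations every atom of the empirical distribution has mass `1/n`, so the
cdf at `xᵢ` is `Rᵢ/n`, the mid-distribution subtracts half an atom, and `∑ p̃³ = n · n⁻³`.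
Substituting into `T₁`, the factor `n` cancels between numerator and `√((n² - 1)/n²)`; when
`n = 1` both sides of the last identity vanish because `Real.sqrt` and division send the
degenerate denominators to `0`. -/

open Finset

namespace Empirical

variable {ι : Type*} [Fintype ι] (x : ι → ℝ)

noncomputable def pmf (t : ℝ) : ℝ := #{j | x j = t} / Fintype.card ι

noncomputable def cdf (t : ℝ) : ℝ := #{j | x j ≤ t} / Fintype.card ι

noncomputable def midCdf (t : ℝ) : ℝ := cdf x t - pmf x t / 2

/-- The first LP-basis function `T₁(·; F̃)`; the sum runs over the set `U` of observed values. -/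
noncomputable def lpBasisOne (t : ℝ) : ℝ :=
  √12 * (midCdf x t - 1 / 2) / √(1 - ∑ u ∈ image x univ, pmf x u ^ 3)

variable {x}

theorem pmf_apply_of_injective (hx : Function.Injective x) (i : ι) :
    pmf x (x i) = 1 / Fintype.card ι := by
  have hsingle : ({j | x j = x i} : Finset ι) = {i} := by
    ext j
    simp [hx.eq_iff]
  simp [pmf, hsingle]

theorem midCdf_apply_of_injective (hx : Function.Injective x) (i : ι) :
    midCdf x (x i) = #{j | x j ≤ x i} / Fintype.card ι - 1 / (2 * Fintype.card ι) := by
  rw [midCdf, cdf, pmf_apply_of_injective hx]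
  ring

theorem sum_pmf_pow_three_of_injective (hx : Function.Injective x) :
    ∑ u ∈ image x univ, pmf x u ^ 3 = 1 / (Fintype.card ι : ℝ) ^ 2 := by
  rw [sum_image fun a _ b _ h => hx h]
  simp only [pmf_apply_of_injective hx, sum_const, card_univ, nsmul_eq_mul]
  rcases eq_or_ne (Fintype.card ι : ℝ) 0 with hn | hn
  · simp [hn]
  · field_simp

theorem one_sub_sum_pmf_pow_three_of_injective [Nonempty ι] (hx : Function.Injective x) :
    1 - ∑ u ∈ image x univ, pmf x u ^ 3 =
      ((Fintype.card ι : ℝ) ^ 2 - 1) / (Fintype.card ι : ℝ) ^ 2 := by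
  have hn : (Fintype.card ι : ℝ) ≠ 0 := by positivity
  rw [sum_pmf_pow_three_of_injective hx]
  field_simp

theorem sqrt_twelve_mul_div_sqrt {n : ℝ} (hn : 0 < n) (r : ℝ) :
    √12 * (r / n - 1 / (2 * n) - 1 / 2) / √((n ^ 2 - 1) / n ^ 2) =
      √(12 / (n ^ 2 - 1)) * (r - (n + 1) / 2) := by
  have hnum : r / n - 1 / (2 * n) - 1 / 2 = (r - (n + 1) / 2) / n := by
    field_simp
    ring
  rw [hnum, Real.sqrt_div' _ (sq_nonneg n), Real.sqrt_sq hn.le, mul_div_assoc',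
    div_div_div_cancel_right₀ hn.ne', Real.sqrt_div (by norm_num)]
  ring

theorem lpBasisOne_apply_of_injective [Nonempty ι] (hx : Function.Injective x) (i : ι) :
    lpBasisOne x (x i) = √(12 / ((Fintype.card ι : ℝ) ^ 2 - 1)) *
      (#{j | x j ≤ x i} - ((Fintype.card ι : ℝ) + 1) / 2) := by
  rw [lpBasisOne, midCdf_apply_of_injective hx, one_sub_sum_pmf_pow_three_of_injective hx,
    sqrt_twelve_mul_div_sqrt (by positivity)]

end Empirical

open Empirical in
/-- For distinct observations `x₁,…,x_n` with ranks
`R i = #{j : x j ≤ x i}`, empirical pmf `p̃(t) = #{j : x j = t}/n`, empirical cdf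
`F̃(t) = #{j : x j ≤ t}/n`, mid-distribution transform `F̃mid = F̃ − p̃/2`, and
first empirical LP-basis function
`T₁(t) = √12 (F̃mid(t) − 1/2)/√(1 − ∑_{u∈U} p̃(u)³)` (with `U` the set of
distinct observed values): `F̃mid(x i) = R i/n − 1/(2n)`,
`1 − ∑_{u∈U} p̃(u)³ = (n² − 1)/n²`, and
`T₁(x i) = √(12/(n²−1)) (R i − (n+1)/2)`. -/
theorem first_LP_basis_ranks (n : ℕ) (hn : 1 ≤ n)
    (x : Fin n → ℝ) (hx : Function.Injective x)
    (R : Fin n → ℕ)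
    (hR : ∀ i, R i = (Finset.univ.filter (fun j => x j ≤ x i)).card)
    (p F Fmid T₁ : ℝ → ℝ)
    (hp : ∀ t, p t = ((Finset.univ.filter (fun j => x j = t)).card : ℝ) / n)
    (hF : ∀ t, F t = ((Finset.univ.filter (fun j => x j ≤ t)).card : ℝ) / n)
    (hFmid : ∀ t, Fmid t = F t - p t / 2)
    (hT : ∀ t, T₁ t = Real.sqrt 12 * (Fmid t - 1 / 2) /
        Real.sqrt (1 - ∑ u ∈ Finset.image x Finset.univ, (p u) ^ 3)) :
    (∀ i, Fmid (x i) = (R i : ℝ) / n - 1 / (2 * n)) ∧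
    (1 - ∑ u ∈ Finset.image x Finset.univ, (p u) ^ 3 = ((n : ℝ) ^ 2 - 1) / (n : ℝ) ^ 2) ∧
    (∀ i, T₁ (x i) = Real.sqrt (12 / ((n : ℝ) ^ 2 - 1)) * ((R i : ℝ) - ((n : ℝ) + 1) / 2)) := by
  have : NeZero n := ⟨by omega⟩
  have hp_eq : p = pmf x := funext fun t => by simp [hp, pmf]
  have hFmid_eq : Fmid = midCdf x := funext fun t => by simp [hFmid, hF, hp_eq, midCdf, cdf]
  have hT_eq : T₁ = lpBasisOne x := funext fun t => by simp [hT, hFmid_eq, hp_eq, lpBasisOne]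
  subst hp_eq hFmid_eq hT_eq
  refine ⟨fun i => ?_, ?_, fun i => ?_⟩
  · simpa [hR] using midCdf_apply_of_injective hx i
  · simpa using one_sub_sum_pmf_pow_three_of_injective hx
  · simpa [hR] using lpBasisOne_apply_of_injective hx i
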